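/- For a CA program P=⟨Π,𝒞,γ,D⟩ and a set Γ of denials over At(Π), if P asp-entails every denial in Γ, then the programs Π[𝒞] and (Π∪Γ)[𝒞] have the same answer sets. -/

import Mathlib

set_option autoImplicit false

namespace EZCSP

/-! ### Regular logic programs -/

/-- A literal: an atom paired with a polarity (`true` = positive atom `a`,
`false` = negated atom `¬ a`). -/
abbrev Lit (α : Type) := α × Bool

/-- The complement of a literal. -/
def complLit {α : Type} (l : Lit α) : Lit α := (l.1, !l.2)

/-- A rule `a₀ ← a₁,…,a_l, not a_{l+1},…,not a_m, not not a_{m+1},…,not not a_n`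
of a regular program.  `head = none` represents `⊥` (a denial). -/
structure Rule (α : Type) where
  head : Option α
  pos : Finset α
  neg : Finset α
  dneg : Finset α
deriving DecidableEq

variable {α V D : Type}

/-- A rule is a denial when its head is `⊥`. -/
def Rule.isDenial (r : Rule α) : Prop := r.head = none

/-- The atoms occurring in a rule. -/
def Rule.atoms [DecidableEq α] (r : Rule α) : Finset α :=
  (r.head.elim (∅ : Finset α) fun a => {a}) ∪ r.pos ∪ r.neg ∪ r.dneg

/-- `At(Π)`: the atoms occurring in a program. -/
def progAtoms [DecidableEq α] (Pi : Finset (Rule α)) : Finset α :=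
  Pi.biUnion Rule.atoms

/-- Satisfaction of the body `a₁∧…∧a_l∧¬a_{l+1}∧…∧¬a_m∧a_{m+1}∧…∧a_n` of a rule
by a set `X` of atoms (viewed as an interpretation). -/
def bodySat (X : Set α) (r : Rule α) : Prop :=
  (∀ a ∈ r.pos, a ∈ X) ∧ (∀ a ∈ r.neg, a ∉ X) ∧ (∀ a ∈ r.dneg, a ∈ X)

/-- Satisfaction of the head of a rule by `X` (`⊥` is never satisfied). -/
def headSat (X : Set α) (r : Rule α) : Prop :=
  ∃ a, r.head = some a ∧ a ∈ X

/-- Satisfaction by `X` of the clause corresponding to a rule. -/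
def clauseSat (X : Set α) (r : Rule α) : Prop :=
  bodySat X r → headSat X r

/-- `Y` satisfies `(Π^X)^cl`, the set of clauses of the reduct of `Π` w.r.t. `X`. -/
def reductModels (Pi : Finset (Rule α)) (X Y : Set α) : Prop :=
  ∀ r ∈ Pi, bodySat X r → (∀ a ∈ r.pos, a ∈ Y) → ∃ a, r.head = some a ∧ a ∈ Y

/-- `X` is an answer set of `Π`: it is subset-minimal among the sets of atoms
satisfying `(Π^X)^cl`. -/
def AnswerSet (Pi : Finset (Rule α)) (X : Set α) : Prop :=
  reductModels Pi X X ∧ ∀ Y : Set α, reductModels Pi X Y → Y ⊆ X → Y = X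

/-- `M⁺`: the atoms occurring positively in a set of literals. -/
def Mplus (M : Set (Lit α)) : Set α := {a | (a, true) ∈ M}

/-- A set of literals is consistent when it contains no complementary pair. -/
def LConsistent (M : Set (Lit α)) : Prop :=
  ∀ a : α, ¬((a, true) ∈ M ∧ (a, false) ∈ M)

/-- `M` is complete over the alphabet `σ`. -/
def LComplete (M : Set (Lit α)) (σ : Finset α) : Prop :=
  ∀ a ∈ σ, (a, true) ∈ M ∨ (a, false) ∈ M

/-- All literals of `M` are over the alphabet `σ`. -/
def LitsOver (M : Set (Lit α)) (σ : Finset α) : Prop :=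
  ∀ l ∈ M, l.1 ∈ σ

/-- `U` is unfounded on the set `M` of literals with respect to `Π`:
`U` consists of atoms occurring in `Π` and for every `a ∈ U` and every body `B`
of a rule of `Π` with head `a`, `M ∩ B̄ ≠ ∅` or `U ∩ B⁺ ≠ ∅`. -/
def UnfoundedOn [DecidableEq α] (Pi : Finset (Rule α)) (M : Set (Lit α)) (U : Set α) : Prop :=
  (∀ a ∈ U, a ∈ progAtoms Pi) ∧
  ∀ r ∈ Pi, ∀ a : α, r.head = some a → a ∈ U →
    ((∃ b ∈ r.pos, (b, false) ∈ M) ∨ (∃ b ∈ r.neg, (b, true) ∈ M) ∨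
      (∃ b ∈ r.dneg, (b, false) ∈ M)) ∨ (∃ b ∈ r.pos, b ∈ U)

/-! ### Constraint satisfaction and CA programs -/

/-- The choice rule `{c}`, i.e. `c ← not not c`. -/
def choiceRule (c : α) : Rule α := ⟨some c, ∅, ∅, {c}⟩

/-- The asp-abstraction `Π[𝒞]`: `Π` extended with a choice rule `{c}` for each `c ∈ 𝒞`. -/
def aspAbs [DecidableEq α] (Pi : Finset (Rule α)) (C : Finset α) : Finset (Rule α) :=
  Pi ∪ C.image choiceRule

/-- A constraint `⟨t, R⟩`: a tuple of variables together with a relation on the domain. -/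
structure Constraint (V D : Type) where
  vars : List V
  rel : Set (List D)

/-- An evaluation `ν` satisfies a constraint. -/
def Constraint.sat (c : Constraint V D) (ν : V → D) : Prop := c.vars.map ν ∈ c.rel

/-- The complement `⟨t, D^k ∖ R⟩` of a constraint `⟨t, R⟩`. -/
def Constraint.compl (c : Constraint V D) : Constraint V D :=
  ⟨c.vars, {l | l.length = c.vars.length ∧ l ∉ c.rel}⟩

/-- The csp-abstraction `K_{P,M}` determined by the constraint atoms `C`, the mapping `γ`
and the set `M` of literals has a solution. -/
def cspSolvable (C : Finset α) (γ : α → Constraint V D) (M : Set (Lit α)) : Prop :=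
  ∃ ν : V → D, ∀ c ∈ C,
    ((c, true) ∈ M → (γ c).sat ν) ∧ ((c, false) ∈ M → (γ c).compl.sat ν)

/-- A logic program with constraint atoms (CA program) `⟨Π,𝒞,γ,D⟩`. -/
structure CAProgram (α V D : Type) [DecidableEq α] where
  prog : Finset (Rule α)
  catoms : Finset α
  γ : α → Constraint V D
  head_not_catom : ∀ r ∈ prog, ∀ a : α, r.head = some a → a ∉ catoms
  catoms_sub : catoms ⊆ progAtoms prog

/-- Answer sets of a CA program with components `Π`, `C`, `γ`:  a consistent and
complete set `M` of literals over `At(Π)` such that `M⁺` is an answer set of `Π[𝒞]`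
and `K_{P,M}` has a solution. -/
def CAAnswerSetG [DecidableEq α] (Pi : Finset (Rule α)) (C : Finset α)
    (γ : α → Constraint V D) (M : Set (Lit α)) : Prop :=
  LConsistent M ∧ LComplete M (progAtoms Pi) ∧ LitsOver M (progAtoms Pi) ∧
    AnswerSet (aspAbs Pi C) (Mplus M) ∧ cspSolvable C γ M

/-- `M` is an answer set of the CA program `P`. -/
def CAProgram.answerSet [DecidableEq α] (P : CAProgram α V D) (M : Set (Lit α)) : Prop :=
  CAAnswerSetG P.prog P.catoms P.γ M

/-- The CA program with components `Π`, `C` asp-entails the denial `G`. -/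
def aspEntailsDenial [DecidableEq α] (Pi : Finset (Rule α)) (C : Finset α) (G : Rule α) : Prop :=
  ∀ M : Set (Lit α), LConsistent M → LComplete M (progAtoms Pi) → LitsOver M (progAtoms Pi) →
    AnswerSet (aspAbs Pi C) (Mplus M) → clauseSat (Mplus M) G

/-- The CA program with components `Π`, `C`, `γ` cp-entails the denial `G`. -/
def cpEntailsDenial [DecidableEq α] (Pi : Finset (Rule α)) (C : Finset α)
    (γ : α → Constraint V D) (G : Rule α) : Prop :=
  (∀ M : Set (Lit α), CAAnswerSetG Pi C γ M → clauseSat (Mplus M) G) ∧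
  (∃ N : Set (Lit α), LConsistent N ∧ LComplete N (progAtoms Pi) ∧ LitsOver N (progAtoms Pi) ∧
    AnswerSet (aspAbs Pi C) (Mplus N) ∧ ¬ clauseSat (Mplus N) G)

/-- The CA program with components `Π`, `C`, `γ` entails the denial `G`. -/
def entailsDenial [DecidableEq α] (Pi : Finset (Rule α)) (C : Finset α)
    (γ : α → Constraint V D) (G : Rule α) : Prop :=
  aspEntailsDenial Pi C G ∨ cpEntailsDenial Pi C γ G

/-- The CA program with components `Π`, `C` asp-entails the literal `l` with respect to
the consistent set `N` of literals. -/
def aspEntailsLit [DecidableEq α] (Pi : Finset (Rule α)) (C : Finset α)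
    (N : Set (Lit α)) (l : Lit α) : Prop :=
  ∀ M : Set (Lit α), LConsistent M → LComplete M (progAtoms Pi) → LitsOver M (progAtoms Pi) →
    AnswerSet (aspAbs Pi C) (Mplus M) → N ⊆ M → l ∈ M

/-- `P[Γ]`: the CA program `P` with the denials of `Γ` added to its program. -/
def CAProgram.addDenials [DecidableEq α] (P : CAProgram α V D) (Γ : Finset (Rule α))
    (hΓ : ∀ r ∈ Γ, r.head = none) : CAProgram α V D where
  prog := P.prog ∪ Γ
  catoms := P.catoms
  γ := P.γ
  head_not_catom := by
    intro r hr a ha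
    rcases Finset.mem_union.mp hr with h | h
    · exact P.head_not_catom r h a ha
    · rw [hΓ r h] at ha; simp at ha
  catoms_sub := by
    intro a ha
    have h1 := P.catoms_sub ha
    unfold progAtoms at h1 ⊢
    rw [Finset.mem_biUnion] at h1 ⊢
    obtain ⟨r, hr, har⟩ := h1
    exact ⟨r, Finset.mem_union_left _ hr, har⟩

/-! ### The transition system `EZ_P` -/

/-- An element of a record: a literal, possibly annotated as a decision literal
(`dec = true`), or the symbol `⊥`. -/
inductive RecElem (α : Type) where
  | lit (l : Lit α) (dec : Bool)
  | bot
deriving DecidableEq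

/-- The set of literals occurring in a record (disregarding annotations). -/
def recLits {α : Type} (M : List (RecElem α)) : Set (Lit α) :=
  {l | ∃ d : Bool, RecElem.lit l d ∈ M}

/-- The underlying "key" of a record element (used to state distinctness). -/
def recKey {α : Type} : RecElem α → Option (Lit α)
  | .lit l _ => some l
  | .bot => none

/-- A record contains no decision literals. -/
def recDecFree {α : Type} (M : List (RecElem α)) : Prop :=
  ∀ l : Lit α, RecElem.lit l true ∉ M

/-- Consistency of (the state determined by) a record: `⊥` does not occur in it and
no atom occurs both positively and negatively. -/
def RecConsistent {α : Type} (M : List (RecElem α)) : Prop :=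
  RecElem.bot ∉ M ∧ ∀ a : α, ¬((a, true) ∈ recLits M ∧ (a, false) ∈ recLits M)

/-- A record relative to the alphabet `σ`. -/
def IsRecord [DecidableEq α] (σ : Finset α) (M : List (RecElem α)) : Prop :=
  (M.map recKey).Nodup ∧
  (∀ l ∈ recLits M, l.1 ∈ σ) ∧
  ((∀ a : α, ¬((a, true) ∈ recLits M ∧ (a, false) ∈ recLits M)) ∨
    ∃ (M' : List (RecElem α)) (l : Lit α) (d : Bool),
      M = M' ++ [RecElem.lit l d] ∧
      (∀ a : α, ¬((a, true) ∈ recLits M' ∧ (a, false) ∈ recLits M')) ∧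
      complLit l ∈ recLits M') ∧
  (∀ (M₁ M₂ : List (RecElem α)) (l : Lit α), M = M₁ ++ RecElem.lit l true :: M₂ →
    l ∉ recLits M₁ ∧ complLit l ∉ recLits M₁) ∧
  (RecElem.bot ∈ M → ∃ M' : List (RecElem α), M = M' ++ [RecElem.bot] ∧ RecElem.bot ∉ M')

/-- A state of the computation: `Failstate` or a triple `M‖Γ‖Λ`. -/
inductive EZState (α : Type) where
  | fail
  | node (M : List (RecElem α)) (Γ Λ : Finset (Rule α))

/-- `Γ` is a set of denials over `At(Π)` entailed by `P`. -/
def DenialsEntailed [DecidableEq α] (P : CAProgram α V D) (Γ : Finset (Rule α)) : Prop :=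
  ∀ r ∈ Γ, r.head = none ∧ r.atoms ⊆ progAtoms P.prog ∧ entailsDenial P.prog P.catoms P.γ r

/-- The nodes of the graph `EZ_P`: states relative to `P`. -/
def IsState [DecidableEq α] (P : CAProgram α V D) : EZState α → Prop
  | .fail => True
  | .node M Γ Λ => IsRecord (progAtoms P.prog) M ∧ DenialsEntailed P Γ ∧ DenialsEntailed P Λ

/-- The names of the transition rules of the graph `EZ_P`. -/
inductive TransLabel where
  | decide | fail | backtrack | aspProp | cpProp | learn | learnT | restart | restartT
deriving DecidableEq

/-- Basic transition rules. -/
def TransLabel.isBasic : TransLabel → Prop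
  | .decide => True
  | .fail => True
  | .backtrack => True
  | .aspProp => True
  | .cpProp => True
  | _ => False

/-- Restart transition rules. -/
def TransLabel.isRestart : TransLabel → Prop
  | .restart => True
  | .restartT => True
  | _ => False

/-- A literal is unassigned by a record. -/
def Unassigned {α : Type} (M : List (RecElem α)) (l : Lit α) : Prop :=
  l ∉ recLits M ∧ complLit l ∉ recLits M

/-- The defining conditions of the transition rules of the graph `EZ_P`. -/
inductive EdgeCond [DecidableEq α] (P : CAProgram α V D) :
    TransLabel → EZState α → EZState α → Prop
  | decide (M : List (RecElem α)) (Γ Λ : Finset (Rule α)) (l : Lit α)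
      (h1 : Unassigned M l) (h2 : RecConsistent M) :
      EdgeCond P .decide (.node M Γ Λ) (.node (M ++ [RecElem.lit l true]) Γ Λ)
  | fail (M : List (RecElem α)) (Γ Λ : Finset (Rule α))
      (h1 : ¬ RecConsistent M) (h2 : recDecFree M) :
      EdgeCond P .fail (.node M Γ Λ) .fail
  | backtrack (M₁ M₂ : List (RecElem α)) (Γ Λ : Finset (Rule α)) (l : Lit α)
      (h1 : ¬ RecConsistent (M₁ ++ RecElem.lit l true :: M₂))
      (h2 : recDecFree M₂) :
      EdgeCond P .backtrack (.node (M₁ ++ RecElem.lit l true :: M₂) Γ Λ)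
        (.node (M₁ ++ [RecElem.lit (complLit l) false]) Γ Λ)
  | aspProp (M : List (RecElem α)) (Γ Λ : Finset (Rule α)) (l : Lit α)
      (h : aspEntailsLit (P.prog ∪ Γ ∪ Λ) P.catoms (recLits M) l) :
      EdgeCond P .aspProp (.node M Γ Λ) (.node (M ++ [RecElem.lit l false]) Γ Λ)
  | cpProp (M : List (RecElem α)) (Γ Λ : Finset (Rule α))
      (h : ¬ cspSolvable P.catoms P.γ (recLits M)) :
      EdgeCond P .cpProp (.node M Γ Λ) (.node (M ++ [RecElem.bot]) Γ Λ)
  | learn (M : List (RecElem α)) (Γ Λ : Finset (Rule α)) (R : Rule α)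
      (h1 : entailsDenial (P.prog ∪ Γ ∪ Λ) P.catoms P.γ R)
      (h2 : R ∉ Γ ∪ Λ) :
      EdgeCond P .learn (.node M Γ Λ) (.node M (insert R Γ) Λ)
  | learnT (M : List (RecElem α)) (Γ Λ : Finset (Rule α)) (R : Rule α)
      (h1 : entailsDenial (P.prog ∪ Γ ∪ Λ) P.catoms P.γ R)
      (h2 : R ∉ Γ ∪ Λ) :
      EdgeCond P .learnT (.node M Γ Λ) (.node M Γ (insert R Λ))
  | restart (M : List (RecElem α)) (Γ Λ : Finset (Rule α)) (h : M ≠ []) :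
      EdgeCond P .restart (.node M Γ Λ) (.node [] Γ Λ)
  | restartT (M : List (RecElem α)) (Γ Λ : Finset (Rule α)) (h : M ≠ []) :
      EdgeCond P .restartT (.node M Γ Λ) (.node [] Γ ∅)

/-- The edges of the graph `EZ_P`: both endpoints are states relative to `P` and the edge
is justified by the transition rule `t`. -/
def Step [DecidableEq α] (P : CAProgram α V D) (t : TransLabel) (s s' : EZState α) : Prop :=
  IsState P s ∧ IsState P s' ∧ EdgeCond P t s s'

/-- A state is semi-terminal when no basic transition rule is applicable to it. -/
def SemiTerminal [DecidableEq α] (P : CAProgram α V D) (s : EZState α) : Prop :=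
  ¬ ∃ (t : TransLabel) (s' : EZState α), t.isBasic ∧ Step P t s s'

/-- The initial state `∅‖∅‖∅`. -/
def initState (α : Type) : EZState α := EZState.node [] ∅ ∅

/-- Reachability in the graph determined by a labeled step relation. -/
def Reach {α : Type} (step : TransLabel → EZState α → EZState α → Prop)
    (s s' : EZState α) : Prop :=
  Relation.ReflTransGen (fun x y => ∃ t : TransLabel, step t x y) s s'

/-- A finite labeled path in the graph determined by a labeled step relation
(only `states 0, …, states len` and `labs 0, …, labs (len-1)` are meaningful). -/
structure LPath {α : Type} (step : TransLabel → EZState α → EZState α → Prop) where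
  len : ℕ
  states : ℕ → EZState α
  labs : ℕ → TransLabel
  valid : ∀ i < len, step (labs i) (states i) (states (i + 1))

/-- A finite path is restart-safe: prior to any edge `e` due to Restart or Restart^t
there is an edge `e'` due to Learn preceding `e` and preceding no other Restart or
Restart^t edge different from `e`. -/
def LPath.RestartSafe {α : Type} {step : TransLabel → EZState α → EZState α → Prop}
    (t : LPath step) : Prop :=
  ∀ i < t.len, (t.labs i).isRestart →
    ∃ j < i, t.labs j = TransLabel.learn ∧
      ∀ k, j < k → k < t.len → (t.labs k).isRestart → k = i

/-- `t` is a subpath of `t'`. -/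
def LPath.Subpath {α : Type} {step : TransLabel → EZState α → EZState α → Prop}
    (t t' : LPath step) : Prop :=
  ∃ d, t.len + d ≤ t'.len ∧ (∀ i ≤ t.len, t.states i = t'.states (d + i)) ∧
    (∀ i < t.len, t.labs i = t'.labs (d + i))

/-- Two finite paths are equal (as paths). -/
def LPath.Equiv {α : Type} {step : TransLabel → EZState α → EZState α → Prop}
    (t t' : LPath step) : Prop :=
  t.len = t'.len ∧ (∀ i ≤ t.len, t.states i = t'.states i) ∧
    (∀ i < t.len, t.labs i = t'.labs i)

/-- An infinite restart-safe sequence of edge labels. -/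
def InfRestartSafe (labs : ℕ → TransLabel) : Prop :=
  ∀ i, (labs i).isRestart →
    ∃ j < i, labs j = TransLabel.learn ∧ ∀ k, j < k → (labs k).isRestart → k = i

/-! ### The measure for Statement 14 -/

/-- The sequence `α(M) = |M₀|,|M₁|,…,|M_p|` of the lengths of the segments of a record
determined by its decision literals. -/
def alphaSeq {α : Type} : List (RecElem α) → List ℕ
  | [] => [0]
  | RecElem.lit _ true :: rest => 0 :: alphaSeq rest
  | _ :: rest =>
    match alphaSeq rest with
    | [] => [1]
    | h :: tl => (h + 1) :: tl

/-- The "smaller" relation on states. -/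
def Smaller [DecidableEq α] : EZState α → EZState α → Prop
  | .node M Γ Λ, .node M' Γ' Λ' =>
      Γ ⊂ Γ' ∨ (Γ = Γ' ∧ Λ ⊂ Λ') ∨
        (Γ = Γ' ∧ Λ = Λ' ∧ List.Lex (· < ·) (alphaSeq M) (alphaSeq M'))
  | _, _ => False

/-! ### The graph `EZSM_P` -/

/-- The set of literals of the clause corresponding to a rule. -/
def clauseLits (r : Rule α) : Set (Lit α) :=
  {l | (∃ a, r.head = some a ∧ l = (a, true)) ∨ (∃ a ∈ r.pos, l = (a, false)) ∨
    (∃ a ∈ r.neg, l = (a, true)) ∨ (∃ a ∈ r.dneg, l = (a, false))}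

/-- The condition of the Unit Propagate rule: there is a clause `C ∨ l` in
`(Π[𝒞]∪Γ∪Λ)^cl`, `M` is consistent, and `M` satisfies `C̄`. -/
def UnitPropCond [DecidableEq α] (P : CAProgram α V D) (Γ Λ : Finset (Rule α))
    (M : List (RecElem α)) (l : Lit α) : Prop :=
  RecConsistent M ∧
    ∃ r ∈ aspAbs P.prog P.catoms ∪ Γ ∪ Λ,
      l ∈ clauseLits r ∧ ∀ l' ∈ clauseLits r, l' ≠ l → complLit l' ∈ recLits M

/-- The condition of the Unfounded rule: `M` is consistent and `l̄ ∈ U` for a set `U`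
unfounded on `M` with respect to `Π[𝒞]∪Γ∪Λ`. -/
def UnfoundedCond [DecidableEq α] (P : CAProgram α V D) (Γ Λ : Finset (Rule α))
    (M : List (RecElem α)) (l : Lit α) : Prop :=
  RecConsistent M ∧
    ∃ U : Set α, UnfoundedOn (aspAbs P.prog P.catoms ∪ Γ ∪ Λ) (recLits M) U ∧
      l.2 = false ∧ l.1 ∈ U

/-- The edges of the graph `EZSM_P`: those edges of `EZ_P` whose `ASP-Propagate`
applications are justified by `Unit Propagate` or `Unfounded`. -/
def StepSM [DecidableEq α] (P : CAProgram α V D) (t : TransLabel) (s s' : EZState α) : Prop :=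
  Step P t s s' ∧
    (t = TransLabel.aspProp →
      ∃ (M : List (RecElem α)) (Γ Λ : Finset (Rule α)) (l : Lit α),
        s = EZState.node M Γ Λ ∧ s' = EZState.node (M ++ [RecElem.lit l false]) Γ Λ ∧
        (UnitPropCond P Γ Λ M l ∨ UnfoundedCond P Γ Λ M l))

/-- A state is semi-terminal in `EZSM_P` when no basic rule of `EZSM_P` applies to it. -/
def SemiTerminalSM [DecidableEq α] (P : CAProgram α V D) (s : EZState α) : Prop :=
  ¬ ∃ (t : TransLabel) (s' : EZState α), t.isBasic ∧ StepSM P t s s'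

/-! ### The graph `EZ^b_P` (black-box configuration) -/

/-- The edge-level restrictions of the black-box strategy. -/
def StepB [DecidableEq α] (P : CAProgram α V D) (t : TransLabel) (s s' : EZState α) : Prop :=
  Step P t s s' ∧
  t ≠ TransLabel.restart ∧
  (t = TransLabel.cpProp →
    ¬ ∃ (t' : TransLabel) (s'' : EZState α),
      (t' = TransLabel.decide ∨ t' = TransLabel.backtrack ∨ t' = TransLabel.fail ∨
        t' = TransLabel.aspProp) ∧ Step P t' s s'') ∧
  (t = TransLabel.learnT → ∀ (M : List (RecElem α)) (Γ Λ Λ' : Finset (Rule α)),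
    s = EZState.node M Γ Λ → s' = EZState.node M Γ Λ' →
    ∀ R ∈ Λ', R ∉ Λ → aspEntailsDenial P.prog P.catoms R) ∧
  (t = TransLabel.learn → ∀ (M : List (RecElem α)) (Γ Γ' Λ : Finset (Rule α)),
    s = EZState.node M Γ Λ → s' = EZState.node M Γ' Λ →
    ∀ R ∈ Γ', R ∉ Γ → cpEntailsDenial P.prog P.catoms P.γ R)

/-- The path-level restrictions of the black-box strategy: Learn applies only immediately
after CP-Propagate, and Restart^t applies immediately after Learn and only then. -/
def BlackBoxPath [DecidableEq α] {P : CAProgram α V D} (t : LPath (StepB P)) : Prop :=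
  (∀ i < t.len, t.labs i = TransLabel.learn → 0 < i ∧ t.labs (i - 1) = TransLabel.cpProp) ∧
  (∀ i < t.len, t.labs i = TransLabel.restartT → 0 < i ∧ t.labs (i - 1) = TransLabel.learn) ∧
  (∀ i, i + 1 < t.len → t.labs i = TransLabel.learn → t.labs (i + 1) = TransLabel.restartT)

/-- A state is semi-terminal in `EZ^b_P` when no basic rule of `EZ^b_P` applies to it. -/
def SemiTerminalB [DecidableEq α] (P : CAProgram α V D) (s : EZState α) : Prop :=
  ¬ ∃ (t : TransLabel) (s' : EZState α), t.isBasic ∧ StepB P t s s'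
/-!
The reduct of a denial is either trivially satisfied or unsatisfiable, so adding denials to a
program does not change the minimality test and only discards the answer sets satisfying the
body of one of them. An answer set `X` of `Π[𝒞]` consists of atoms of `Π` (as `𝒞 ⊆ At(Π)`), so it
is `M⁺` for the complete consistent set `M` of literals over `At(Π)` with positive part `X`;
asp-entailment applied to this `M` shows that `X` violates no denial of `Γ`.
-/

lemma reductModels_union [DecidableEq α] {A B : Finset (Rule α)} {X Y : Set α} :
    reductModels (A ∪ B) X Y ↔ reductModels A X Y ∧ reductModels B X Y := by
  simp only [reductModels, Finset.mem_union, or_imp, forall_and]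

lemma clauseSat_iff_not_bodySat {r : Rule α} (hr : r.head = none) {X : Set α} :
    clauseSat X r ↔ ¬ bodySat X r := by
  simp [clauseSat, headSat, hr]

lemma reductModels_of_forall_not_bodySat {Γ : Finset (Rule α)} {X Y : Set α}
    (h : ∀ r ∈ Γ, ¬ bodySat X r) : reductModels Γ X Y :=
  fun r hr hb _ => absurd hb (h r hr)

lemma not_bodySat_of_reductModels_self {Γ : Finset (Rule α)} (hΓ : ∀ r ∈ Γ, r.head = none)
    {X : Set α} (h : reductModels Γ X X) : ∀ r ∈ Γ, ¬ bodySat X r := by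
  intro r hr hb
  obtain ⟨a, ha, -⟩ := h r hr hb hb.1
  simp [hΓ r hr] at ha

theorem answerSet_union_iff_of_denials [DecidableEq α] {Pi Γ : Finset (Rule α)}
    (hΓ : ∀ r ∈ Γ, r.head = none) {X : Set α} :
    AnswerSet (Pi ∪ Γ) X ↔ AnswerSet Pi X ∧ ∀ r ∈ Γ, ¬ bodySat X r := by
  simp only [AnswerSet, reductModels_union]
  constructor
  · rintro ⟨⟨hPi, hΓX⟩, hmin⟩
    have hnb := not_bodySat_of_reductModels_self hΓ hΓX
    exact ⟨⟨hPi, fun Y hY => hmin Y ⟨hY, reductModels_of_forall_not_bodySat hnb⟩⟩, hnb⟩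
  · rintro ⟨⟨hPi, hmin⟩, hnb⟩
    exact ⟨⟨hPi, reductModels_of_forall_not_bodySat hnb⟩, fun Y hY => hmin Y hY.1⟩

lemma answerSet_subset_progAtoms [DecidableEq α] {Pi : Finset (Rule α)} {X : Set α}
    (h : AnswerSet Pi X) : X ⊆ progAtoms Pi := by
  have hmod : reductModels Pi X (X ∩ progAtoms Pi) := by
    intro r hr hb hpos
    obtain ⟨a, ha, haX⟩ := h.1 r hr hb fun b hb => (hpos b hb).1
    refine ⟨a, ha, haX, Finset.mem_biUnion.mpr ⟨r, hr, ?_⟩⟩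
    simp [Rule.atoms, ha]
  rw [← h.2 _ hmod Set.inter_subset_left]
  exact Set.inter_subset_right

lemma progAtoms_aspAbs_subset [DecidableEq α] {Pi : Finset (Rule α)} {C : Finset α}
    (hC : C ⊆ progAtoms Pi) : progAtoms (aspAbs Pi C) ⊆ progAtoms Pi := by
  intro a ha
  obtain ⟨r, hr, har⟩ := Finset.mem_biUnion.mp ha
  rcases Finset.mem_union.mp hr with hr | hr
  · exact Finset.mem_biUnion.mpr ⟨r, hr, har⟩
  · obtain ⟨c, hc, rfl⟩ := Finset.mem_image.mp hr
    obtain rfl : a = c := by simpa [choiceRule, Rule.atoms] using har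
    exact hC hc

lemma aspAbs_union [DecidableEq α] (Pi Γ : Finset (Rule α)) (C : Finset α) :
    aspAbs (Pi ∪ Γ) C = aspAbs Pi C ∪ Γ :=
  Finset.union_right_comm _ _ _

def litsOf (σ : Finset α) (X : Set α) : Set (Lit α) :=
  {l | l.1 ∈ σ ∧ (l.2 = true ↔ l.1 ∈ X)}

lemma lConsistent_litsOf (σ : Finset α) (X : Set α) : LConsistent (litsOf σ X) := by
  rintro a ⟨hT, hF⟩
  simpa using hF.2.mpr (hT.2.mp rfl)

lemma lComplete_litsOf (σ : Finset α) (X : Set α) : LComplete (litsOf σ X) σ := by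
  intro a ha
  by_cases h : a ∈ X
  · exact Or.inl ⟨ha, by simp [h]⟩
  · exact Or.inr ⟨ha, by simp [h]⟩

lemma litsOver_litsOf (σ : Finset α) (X : Set α) : LitsOver (litsOf σ X) σ :=
  fun _ hl => hl.1

lemma Mplus_litsOf {σ : Finset α} {X : Set α} (hX : X ⊆ σ) : Mplus (litsOf σ X) = X := by
  ext a
  exact ⟨fun h => h.2.mp rfl, fun h => ⟨hX h, iff_of_true rfl h⟩⟩

lemma aspEntailsDenial.clauseSat [DecidableEq α] {Pi : Finset (Rule α)} {C : Finset α}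
    {G : Rule α} (hG : aspEntailsDenial Pi C G) (hC : C ⊆ progAtoms Pi) {X : Set α}
    (hX : AnswerSet (aspAbs Pi C) X) : clauseSat X G := by
  have hXσ : X ⊆ progAtoms Pi :=
    (answerSet_subset_progAtoms hX).trans (Finset.coe_subset.mpr (progAtoms_aspAbs_subset hC))
  have h := hG (litsOf (progAtoms Pi) X) (lConsistent_litsOf _ _) (lComplete_litsOf _ _)
    (litsOver_litsOf _ _)
  rw [Mplus_litsOf hXσ] at h
  exact h hX

theorem stmt2_general [DecidableEq α] (P : CAProgram α V D) (Γ : Finset (Rule α))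
    (hΓhead : ∀ r ∈ Γ, r.head = none)
    (hent : ∀ r ∈ Γ, aspEntailsDenial P.prog P.catoms r) :
    ∀ X : Set α, AnswerSet (aspAbs (P.prog ∪ Γ) P.catoms) X ↔
      AnswerSet (aspAbs P.prog P.catoms) X := by
  intro X
  rw [aspAbs_union, answerSet_union_iff_of_denials hΓhead]
  refine and_iff_left_of_imp fun hX r hr => ?_
  exact (clauseSat_iff_not_bodySat (hΓhead r hr)).mp ((hent r hr).clauseSat P.catoms_sub hX)

theorem stmt2 [DecidableEq α] (P : CAProgram α V D) (Γ : Finset (Rule α))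
    (hΓhead : ∀ r ∈ Γ, r.head = none)
    (hΓatoms : ∀ r ∈ Γ, r.atoms ⊆ progAtoms P.prog)
    (hent : ∀ r ∈ Γ, aspEntailsDenial P.prog P.catoms r) :
    ∀ X : Set α, AnswerSet (aspAbs (P.prog ∪ Γ) P.catoms) X ↔
      AnswerSet (aspAbs P.prog P.catoms) X :=
  stmt2_general P Γ hΓhead hent

end EZCSP
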